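/- arXiv:2404.18299 — 3 statements merged into one kernel-verified Lean document; each statement's English description precedes it below -/
import Mathlib

section
/- Let 1 ≤ p < r ≤ ∞ and let V = (v_{ij}) be a symmetric n×n real matrix. Then the r→p operator norm of V is bounded above by ( Σ_{i=1}^n ( Σ_{j=1}^n |v_{ij}| )^{rp/(r-p)} )^{(r-p)/(rp)}. -/
open Matrix ENNReal

/-- The ℓ_q norm on ℝⁿ for an extended-real exponent `q ∈ [1,∞]`. -/
noncomputable def lnorm {n : ℕ} (q : ℝ≥0∞) (x : Fin n → ℝ) : ℝ :=
  if q = ⊤ then ⨆ i, |x i| else (∑ i, |x i| ^ q.toReal) ^ (1 / q.toReal)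

/-- The `r → p` operator norm of an `n × n` real matrix. -/
noncomputable def opNorm {n : ℕ} (r p : ℝ≥0∞) (A : Matrix (Fin n) (Fin n) ℝ) : ℝ :=
  sSup {c | ∃ x : Fin n → ℝ, lnorm r x ≤ 1 ∧ c = lnorm p (A.mulVec x)}

/-!
Let `S i = ∑ j |V i j|` and `1/q = 1/p - 1/r`; passing to `|V|` and `|x|` we may assume
`V, x ≥ 0`. For `t ≥ p` and `σ = p/t`, weighted Hölder in row `i` gives
`(V x)_i ^ p ≤ S_i ^ (p - σ) (V x^t)_i ^ σ`, and Hölder over `i` with exponents `1/(1-σ)`, `1/σ`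
bounds the sum of these by `(∑ S_i ^ q) ^ (1-σ) (∑_i (V x^t)_i) ^ σ` as soon as
`q (1 - σ) = p - σ`. By symmetry `∑_i (V x^t)_i = ∑_j S_j x_j ^ t`, which Hölder bounds by
`‖S‖_q ‖x‖_r ^ t` when `t = r (1 - 1/q)`; this `t` also satisfies `q (1 - σ) = p - σ`, and the
exponents of `‖S‖_q` then add up to `p`.
-/

open Finset Real

theorem sum_rpow_one_sub_mul_rpow_le {ι : Type*} (s : Finset ι) {f g : ι → ℝ}
    (hf : ∀ i, 0 ≤ f i) (hg : ∀ i, 0 ≤ g i) {θ : ℝ} (hθ₀ : 0 ≤ θ) (hθ₁ : θ ≤ 1) :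
    ∑ i ∈ s, f i ^ (1 - θ) * g i ^ θ ≤ (∑ i ∈ s, f i) ^ (1 - θ) * (∑ i ∈ s, g i) ^ θ := by
  rcases hθ₀.eq_or_lt with rfl | hθ₀
  · simp
  rcases hθ₁.eq_or_lt with rfl | hθ₁
  · simp
  have h := inner_le_Lp_mul_Lq_of_nonneg s (HolderConjugate.one_sub_inv_inv hθ₀ hθ₁)
    (fun i _ => rpow_nonneg (hf i) (1 - θ)) (fun i _ => rpow_nonneg (hg i) θ)
  have hθ' : 1 - θ ≠ 0 := by linarith
  simpa [← rpow_mul (hf _), ← rpow_mul (hg _), hθ', hθ₀.ne'] using h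

theorem rpow_inner_le_weight_mul_Lp_of_nonneg {ι : Type*} (s : Finset ι) {w f : ι → ℝ}
    (hw : ∀ i, 0 ≤ w i) (hf : ∀ i, 0 ≤ f i) {t P : ℝ} (ht : 1 ≤ t) (hP : 0 ≤ P) :
    (∑ i ∈ s, w i * f i) ^ P ≤
      (∑ i ∈ s, w i) ^ (P - P / t) * (∑ i ∈ s, w i * f i ^ t) ^ (P / t) := by
  have hW : 0 ≤ ∑ i ∈ s, w i := sum_nonneg fun i _ => hw i
  have hT : 0 ≤ ∑ i ∈ s, w i * f i ^ t :=
    sum_nonneg fun i _ => mul_nonneg (hw i) (rpow_nonneg (hf i) t)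
  calc (∑ i ∈ s, w i * f i) ^ P
      ≤ ((∑ i ∈ s, w i) ^ (1 - t⁻¹) * (∑ i ∈ s, w i * f i ^ t) ^ t⁻¹) ^ P := by
        gcongr
        · exact sum_nonneg fun i _ => mul_nonneg (hw i) (hf i)
        · exact inner_le_weight_mul_Lp_of_nonneg s ht w f hw hf
    _ = _ := by
        rw [mul_rpow (by positivity) (by positivity), ← rpow_mul hW, ← rpow_mul hT]
        ring_nf

theorem Matrix.IsSymm.sum_mulVec {ι α : Type*} [Fintype ι] [NonUnitalNonAssocSemiring α]
    {A : Matrix ι ι α} (hA : A.IsSymm) (v : ι → α) :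
    ∑ i, (A *ᵥ v) i = ∑ j, (∑ k, A j k) * v j := by
  simp only [mulVec, dotProduct, sum_mul]
  rw [sum_comm]
  exact sum_congr rfl fun j _ => sum_congr rfl fun i _ => by rw [hA.apply]

section RowSum

variable {ι : Type*} [Fintype ι] {A : Matrix ι ι ℝ} {ξ : ι → ℝ}

theorem sum_rpow_mulVec_le_rowSum_mul_sum_mulVec_rpow (hA : ∀ i j, 0 ≤ A i j)
    (hξ : ∀ j, 0 ≤ ξ j) {P q t : ℝ} (ht : 1 ≤ t) (hP : 0 ≤ P) (hPt : P ≤ t)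
    (hq : q * (1 - P / t) = P - P / t) :
    ∑ i, (A *ᵥ ξ) i ^ P ≤
      (∑ i, (∑ j, A i j) ^ q) ^ (1 - P / t) * (∑ i, (A *ᵥ fun j => ξ j ^ t) i) ^ (P / t) := by
  have hS : ∀ i, 0 ≤ ∑ j, A i j := fun i => sum_nonneg fun j _ => hA i j
  calc ∑ i, (A *ᵥ ξ) i ^ P
      ≤ ∑ i, ((∑ j, A i j) ^ q) ^ (1 - P / t) * (A *ᵥ fun j => ξ j ^ t) i ^ (P / t) :=
        sum_le_sum fun i _ => by
          rw [← rpow_mul (hS i), hq]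
          exact rpow_inner_le_weight_mul_Lp_of_nonneg univ (hA i) hξ ht hP
    _ ≤ _ := sum_rpow_one_sub_mul_rpow_le univ (fun i => rpow_nonneg (hS i) q)
        (fun i => sum_nonneg fun j _ => mul_nonneg (hA i j) (rpow_nonneg (hξ j) t))
        (by positivity) ((div_le_one (by linarith)).2 hPt)

theorem sum_mulVec_le_of_isSymm (hA : ∀ i j, 0 ≤ A i j) (hsymm : A.IsSymm) (hξ : ∀ j, 0 ≤ ξ j)
    {q q' : ℝ} (hqq' : q.HolderConjugate q') :
    ∑ i, (A *ᵥ ξ) i ≤ (∑ i, (∑ j, A i j) ^ q) ^ (1 / q) * (∑ j, ξ j ^ q') ^ (1 / q') := by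
  rw [hsymm.sum_mulVec]
  exact inner_le_Lp_mul_Lq_of_nonneg univ hqq' (fun i _ => sum_nonneg fun j _ => hA i j)
    fun j _ => hξ j

theorem sum_rpow_mulVec_le_of_isSymm (hA : ∀ i j, 0 ≤ A i j) (hsymm : A.IsSymm)
    (hξ : ∀ j, 0 ≤ ξ j) {P q R : ℝ} (hP : 1 ≤ P) (hqRP : q.HolderTriple R P) :
    ∑ i, (A *ᵥ ξ) i ^ P ≤ (∑ i, (∑ j, A i j) ^ q) ^ (P / q) * (∑ j, ξ j ^ R) ^ (P / R) := by
  obtain ⟨hq, hR⟩ : 0 < q ∧ 0 < R := ⟨hqRP.pos, hqRP.symm.pos⟩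
  have hqRP' : q * R = P * R + P * q := by
    have := hqRP.inv_eq
    field_simp at this
    linarith
  have hq1 : 0 < q - 1 := by nlinarith
  have hq' : q.HolderConjugate (1 - q⁻¹)⁻¹ := by
    rw [Real.holderConjugate_iff]; exact ⟨by linarith, by simp⟩
  set t := R * (1 - q⁻¹) with ht
  have ht' : t = R * (q - 1) / q := by rw [ht]; field_simp
  have ht1 : 1 ≤ t := by rw [ht', le_div_iff₀ hq]; nlinarith
  have hPt : P ≤ t := by rw [ht', le_div_iff₀ hq]; nlinarith
  have hqt : q * (1 - P / t) = P - P / t := by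
    rw [ht']; field_simp; linear_combination (q - 1) * hqRP'
  have htR : t * (1 - q⁻¹)⁻¹ = R := by
    rw [ht, mul_assoc, mul_inv_cancel₀ (inv_pos.mp hq'.symm.pos).ne', mul_one]
  set Sq := ∑ i, (∑ j, A i j) ^ q
  have hSq : 0 ≤ Sq := sum_nonneg fun i _ => rpow_nonneg (sum_nonneg fun j _ => hA i j) q
  have hξR : 0 ≤ ∑ j, ξ j ^ R := sum_nonneg fun j _ => rpow_nonneg (hξ j) R
  have hξt : ∀ j, 0 ≤ ξ j ^ t := fun j => rpow_nonneg (hξ j) t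
  have hcol : ∑ i, (A *ᵥ fun j => ξ j ^ t) i ≤ Sq ^ q⁻¹ * (∑ j, ξ j ^ R) ^ (1 - q⁻¹) := by
    simpa only [← rpow_mul (hξ _), htR, one_div, inv_inv] using
      sum_mulVec_le_of_isSymm hA hsymm hξt hq'
  calc ∑ i, (A *ᵥ ξ) i ^ P
      ≤ Sq ^ (1 - P / t) * (∑ i, (A *ᵥ fun j => ξ j ^ t) i) ^ (P / t) :=
        sum_rpow_mulVec_le_rowSum_mul_sum_mulVec_rpow hA hξ ht1 (by linarith) hPt hqt
    _ ≤ Sq ^ (1 - P / t) * (Sq ^ q⁻¹ * (∑ j, ξ j ^ R) ^ (1 - q⁻¹)) ^ (P / t) := by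
        gcongr
        exact sum_nonneg fun i _ => sum_nonneg fun j _ => mul_nonneg (hA i j) (hξt j)
    _ = Sq ^ (P / q) * (∑ j, ξ j ^ R) ^ (P / R) := by
        have hexpS : 1 - P / t + q⁻¹ * (P / t) = P / q := by
          rw [eq_div_iff hq.ne']; linear_combination hqt + P / t * mul_inv_cancel₀ hq.ne'
        have hexpξ : (1 - q⁻¹) * (P / t) = P / R := by rw [ht]; field_simp
        rw [mul_rpow (by positivity) (by positivity), ← rpow_mul hSq, ← rpow_mul hξR, ← mul_assoc,
          ← rpow_add' hSq (by rw [hexpS]; positivity), hexpS, hexpξ]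

end RowSum

section LNorm

variable {n : ℕ}

theorem lnorm_of_ne_top {q : ℝ≥0∞} (hq : q ≠ ⊤) (x : Fin n → ℝ) :
    lnorm q x = (∑ i, |x i| ^ q.toReal) ^ (1 / q.toReal) :=
  if_neg hq

theorem abs_le_lnorm_top (x : Fin n → ℝ) (i : Fin n) : |x i| ≤ lnorm ⊤ x := by
  rw [lnorm, if_pos rfl]
  exact le_ciSup (f := fun i => |x i|) (Set.finite_range _).bddAbove i

theorem lnorm_mono {x y : Fin n → ℝ} (h : ∀ i, |x i| ≤ |y i|) (q : ℝ≥0∞) :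
    lnorm q x ≤ lnorm q y := by
  by_cases hq : q = ⊤
  · simp only [lnorm, if_pos hq]
    exact ciSup_mono (Set.finite_range _).bddAbove h
  · rw [lnorm_of_ne_top hq, lnorm_of_ne_top hq]
    gcongr (∑ i, ?_ ^ _) ^ _ with i
    exact h i

theorem abs_mulVec_le (V : Matrix (Fin n) (Fin n) ℝ) (x : Fin n → ℝ) (i : Fin n) :
    |(V *ᵥ x) i| ≤ (V.map abs *ᵥ |x|) i :=
  calc |(V *ᵥ x) i| = |∑ j, V i j * x j| := rfl
    _ ≤ ∑ j, |V i j * x j| := abs_sum_le_sum_abs _ _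
    _ = (V.map abs *ᵥ |x|) i := by simp [mulVec, dotProduct, abs_mul]

theorem lnorm_mulVec_le_rowSum_of_lnorm_top_le_one (V : Matrix (Fin n) (Fin n) ℝ)
    {x : Fin n → ℝ} (hx : lnorm ⊤ x ≤ 1) (p : ℝ≥0∞) :
    lnorm p (V *ᵥ x) ≤ lnorm p fun i => ∑ j, |V i j| := by
  refine lnorm_mono (fun i => (abs_mulVec_le V x i).trans ?_) p
  calc (V.map abs *ᵥ |x|) i = ∑ j, |V i j| * |x j| := rfl
    _ ≤ ∑ j, |V i j| := sum_le_sum fun j _ =>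
        mul_le_of_le_one_right (abs_nonneg _) ((abs_le_lnorm_top x j).trans hx)
    _ ≤ |(∑ j, |V i j|)| := le_abs_self _

theorem lnorm_mulVec_le_of_isSymm {V : Matrix (Fin n) (Fin n) ℝ} (hV : V.IsSymm)
    {r p : ℝ≥0∞} (hp : 1 ≤ p) (hpr : p < r) (hr : r ≠ ⊤) (x : Fin n → ℝ) :
    lnorm p (V *ᵥ x) ≤
      (∑ i, (∑ j, |V i j|) ^ (1 / ((p⁻¹).toReal - (r⁻¹).toReal)))
        ^ ((p⁻¹).toReal - (r⁻¹).toReal) * lnorm r x := by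
  have hpt : p ≠ ⊤ := hpr.ne_top
  rw [lnorm_of_ne_top hpt, lnorm_of_ne_top hr, ENNReal.toReal_inv, ENNReal.toReal_inv]
  set P := p.toReal
  set R := r.toReal
  have hP : 1 ≤ P := by simpa using ENNReal.toReal_mono hpt hp
  have hPR : P < R := (ENNReal.toReal_lt_toReal hpt hr).2 hpr
  set γ := P⁻¹ - R⁻¹
  have hγ : 0 < γ := sub_pos.2 (inv_strictAnti₀ (by linarith) hPR)
  have hT : (1 / γ).HolderTriple R P := ⟨by simp [γ], by positivity, by linarith⟩
  have key := sum_rpow_mulVec_le_of_isSymm (A := V.map abs) (fun i j => abs_nonneg _)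
    (hV.map abs) (ξ := |x|) (fun j => abs_nonneg _) hP hT
  have hS : 0 ≤ ∑ i, (∑ j, |V i j|) ^ (1 / γ) := by positivity
  have hX : 0 ≤ ∑ j, |x j| ^ R := by positivity
  calc (∑ i, |(V *ᵥ x) i| ^ P) ^ (1 / P)
      ≤ (∑ i, (V.map abs *ᵥ |x|) i ^ P) ^ (1 / P) := by
        gcongr with i
        exact abs_mulVec_le V x i
    _ ≤ ((∑ i, (∑ j, |V i j|) ^ (1 / γ)) ^ (P / (1 / γ)) * (∑ j, |x j| ^ R) ^ (P / R))
          ^ (1 / P) := by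
        gcongr
        · exact sum_nonneg fun i _ => rpow_nonneg ((abs_nonneg _).trans (abs_mulVec_le V x i)) P
        · exact key
    _ = _ := by
        rw [mul_rpow (by positivity) (by positivity), ← rpow_mul hS, ← rpow_mul hX]
        congr 2 <;> field_simp

end LNorm

/-- Row-sum upper bound for the `r → p` norm of a symmetric matrix, where
`γ = 1/p - 1/r` and the exponent `rp/(r-p)` is `1/γ`. -/
theorem opNorm_le_rowSum {n : ℕ} (V : Matrix (Fin n) (Fin n) ℝ) (hV : V.IsSymm)
    (r p : ℝ≥0∞) (hp : 1 ≤ p) (hpr : p < r) :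
    opNorm r p V ≤
      (∑ i, (∑ j, |V i j|) ^ (1 / ((p⁻¹).toReal - (r⁻¹).toReal)))
        ^ ((p⁻¹).toReal - (r⁻¹).toReal) := by
  refine Real.sSup_le ?_ (by positivity)
  rintro _ ⟨x, hx, rfl⟩
  by_cases hr : r = ⊤
  · subst hr
    refine (lnorm_mulVec_le_rowSum_of_lnorm_top_le_one V hx p).trans_eq ?_
    simp [lnorm_of_ne_top hpr.ne_top, ENNReal.toReal_inv, abs_sum_of_nonneg']
  · exact (lnorm_mulVec_le_of_isSymm hV hp hpr hr x).trans
      (mul_le_of_le_one_right (by positivity) hx)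
end

section
/- Let 1 ≤ p < r ≤ ∞ and let V be a symmetric n×n matrix with nonnegative entries. For any vectors x, y ∈ ℝⁿ with ‖x‖_r = 1 and ‖y‖_{p*} = 1, one has Σ_{i,j} v_{ij} x_i y_j ≤ ( Σ_i ( Σ_j v_{ij} )^{rp/(r-p)} )^{(r-p)/(rp)}. (Key step: apply Hölder's inequality twice after splitting |v_{ij}| = |v_{ij}|^{p/(rp-r+p)} · |v_{ij}|^{(rp-r)/(rp-r+p)}.) -/
/-- The ℓ_q norm on ℝⁿ for a finite real exponent `q`. -/
noncomputable def rnorm {n : ℕ} (q : ℝ) (x : Fin n → ℝ) : ℝ :=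
  (∑ i, |x i| ^ q) ^ (1 / q)

/-!
Write `w i = ∑ j, V i j`, `1/s = 1/p - 1/r`, `θ = 1/r + 1/p*` (so `θ + 1/s = 1`) and
`α = 1/(rθ)`, `β = 1/(p*θ)`. Where `V i j > 0`,
`|x i| |y j| = ((|x i|^r / w i)^α (|y j|^{p*} / w j)^β)^θ · ((w i^{s-1})^α (w j^{s-1})^β)^{1/s}`.
Weighted Hölder over the pairs `(i, j)`, with weights `V i j`, splits the bilinear form into the
two bracketed factors. Each factor is again a weighted geometric mean over the pairs, and
Hölder with exponents `α, β` bounds it by a product of sums in which the column sums of `V`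
appear; by symmetry these are the row sums `w`, which cancel against the denominators in the
first factor (giving `‖x‖_r^r ‖y‖_{p*}^{p*} ≤ 1`) and turn `w^{s-1}` into `w^s` in the second.
-/

open Finset Real

section Holder

variable {ι : Type*} {a b : ℝ}

theorem sum_mul_rpow_mul_rpow_le (s : Finset ι) {c f g : ι → ℝ}
    (hc : ∀ i ∈ s, 0 ≤ c i) (hf : ∀ i ∈ s, 0 ≤ f i) (hg : ∀ i ∈ s, 0 ≤ g i)
    (ha : 0 < a) (hb : 0 < b) (hab : a + b = 1) :
    ∑ i ∈ s, c i * (f i ^ a * g i ^ b) ≤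
      (∑ i ∈ s, c i * f i) ^ a * (∑ i ∈ s, c i * g i) ^ b := by
  have holder := inner_le_Lp_mul_Lq_of_nonneg s (HolderConjugate.inv_inv ha hb hab)
    (f := fun i => (c i * f i) ^ a) (g := fun i => (c i * g i) ^ b)
    (fun i hi => rpow_nonneg (mul_nonneg (hc i hi) (hf i hi)) a)
    (fun i hi => rpow_nonneg (mul_nonneg (hc i hi) (hg i hi)) b)
  convert holder using 2 with i hi
  · rw [mul_rpow (hc i hi) (hf i hi), mul_rpow (hc i hi) (hg i hi), mul_mul_mul_comm,
      ← rpow_add' (hc i hi) (by simp [hab]), hab, rpow_one]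
  · rw [one_div, inv_inv]
    congr 1
    exact sum_congr rfl fun i hi => (rpow_rpow_inv (mul_nonneg (hc i hi) (hf i hi)) ha.ne').symm
  · rw [one_div, inv_inv]
    congr 1
    exact sum_congr rfl fun i hi => (rpow_rpow_inv (mul_nonneg (hc i hi) (hg i hi)) hb.ne').symm

variable {κ : Type*} [Fintype ι] [Fintype κ] {V : ι → κ → ℝ}

theorem sum_sum_mul_rpow_mul_rpow_le (hV : ∀ i j, 0 ≤ V i j) {F G : ι → κ → ℝ}
    (hF : ∀ i j, 0 ≤ F i j) (hG : ∀ i j, 0 ≤ G i j) (ha : 0 < a) (hb : 0 < b)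
    (hab : a + b = 1) :
    ∑ i, ∑ j, V i j * (F i j ^ a * G i j ^ b) ≤
      (∑ i, ∑ j, V i j * F i j) ^ a * (∑ i, ∑ j, V i j * G i j) ^ b := by
  simpa only [Fintype.sum_prod_type] using
    sum_mul_rpow_mul_rpow_le univ (c := fun z : ι × κ => V z.1 z.2)
      (f := fun z => F z.1 z.2) (g := fun z => G z.1 z.2) (fun z _ => hV _ _)
      (fun z _ => hF _ _) (fun z _ => hG _ _) ha hb hab

theorem sum_sum_mul_rpow_mul_rpow_le_rowSum_colSum (hV : ∀ i j, 0 ≤ V i j) {f : ι → ℝ}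
    {g : κ → ℝ} (hf : ∀ i, 0 ≤ f i) (hg : ∀ j, 0 ≤ g j) (ha : 0 < a) (hb : 0 < b)
    (hab : a + b = 1) :
    ∑ i, ∑ j, V i j * (f i ^ a * g j ^ b) ≤
      (∑ i, (∑ j, V i j) * f i) ^ a * (∑ j, (∑ i, V i j) * g j) ^ b := by
  convert sum_sum_mul_rpow_mul_rpow_le hV (fun i _ => hf i) (fun _ j => hg j) ha hb hab
    using 3 <;> simp only [sum_mul]
  exact sum_comm

end Holder

theorem mul_rpow_rpow {x y : ℝ} (hx : 0 ≤ x) (hy : 0 ≤ y) (α β θ : ℝ) :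
    (x ^ α * y ^ β) ^ θ = x ^ (α * θ) * y ^ (β * θ) := by
  rw [mul_rpow (rpow_nonneg hx α) (rpow_nonneg hy β), rpow_mul hx, rpow_mul hy]

theorem div_rpow_inv_mul_rpow_inv {a u r : ℝ} (ha : 0 ≤ a) (hu : 0 < u) (hr : r ≠ 0) :
    (a ^ r / u) ^ r⁻¹ * u ^ r⁻¹ = a := by
  rw [div_rpow (rpow_nonneg ha r) hu.le, rpow_rpow_inv ha hr,
    div_mul_cancel₀ _ (rpow_pos_of_pos hu _).ne']

theorem mul_eq_rpow_mul_rpow {a b u w r q t : ℝ} (ha : 0 ≤ a) (hb : 0 ≤ b) (hu : 0 < u)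
    (hw : 0 < w) (hr : 0 < r) (hq : 0 < q) (ht : 0 < t) (hrqt : r⁻¹ + q⁻¹ + t = 1) :
    a * b = ((a ^ r / u) ^ (r⁻¹ / (r⁻¹ + q⁻¹)) * (b ^ q / w) ^ (q⁻¹ / (r⁻¹ + q⁻¹))) ^ (r⁻¹ + q⁻¹) *
      ((u ^ (t⁻¹ - 1)) ^ (r⁻¹ / (r⁻¹ + q⁻¹)) * (w ^ (t⁻¹ - 1)) ^ (q⁻¹ / (r⁻¹ + q⁻¹))) ^ t := by
  have hθ : r⁻¹ + q⁻¹ ≠ 0 := by positivity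
  have hσ (e : ℝ) : (t⁻¹ - 1) * (e / (r⁻¹ + q⁻¹) * t) = e := by
    have ht' : (t⁻¹ - 1) * t = r⁻¹ + q⁻¹ := by rw [sub_mul, inv_mul_cancel₀ ht.ne']; linarith
    rw [mul_comm _ t, ← mul_assoc, ht', mul_div_cancel₀ _ hθ]
  rw [mul_rpow_rpow (div_nonneg (rpow_nonneg ha r) hu.le) (div_nonneg (rpow_nonneg hb q) hw.le),
    mul_rpow_rpow (rpow_nonneg hu.le _) (rpow_nonneg hw.le _), ← rpow_mul hu.le,
    ← rpow_mul hw.le, div_mul_cancel₀ _ hθ, div_mul_cancel₀ _ hθ, hσ, hσ]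
  calc a * b = ((a ^ r / u) ^ r⁻¹ * u ^ r⁻¹) * ((b ^ q / w) ^ q⁻¹ * w ^ q⁻¹) := by
        rw [div_rpow_inv_mul_rpow_inv ha hu hr.ne', div_rpow_inv_mul_rpow_inv hb hw hq.ne']
    _ = _ := by ring

theorem mul_mul_le_mul_rpow_mul_rpow {v a b u w r q t : ℝ} (hv : 0 ≤ v) (hu : 0 < v → 0 < u)
    (hw : 0 < v → 0 < w) (hr : 0 < r) (hq : 0 < q) (ht : 0 < t) (hrqt : r⁻¹ + q⁻¹ + t = 1) :
    v * a * b ≤ v * (((|a| ^ r / u) ^ (r⁻¹ / (r⁻¹ + q⁻¹)) * (|b| ^ q / w) ^ (q⁻¹ / (r⁻¹ + q⁻¹))) ^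
      (r⁻¹ + q⁻¹) * ((u ^ (t⁻¹ - 1)) ^ (r⁻¹ / (r⁻¹ + q⁻¹)) *
        (w ^ (t⁻¹ - 1)) ^ (q⁻¹ / (r⁻¹ + q⁻¹))) ^ t) := by
  rcases hv.eq_or_lt with rfl | hv
  · simp
  rw [← mul_eq_rpow_mul_rpow (abs_nonneg a) (abs_nonneg b) (hu hv) (hw hv) hr hq ht hrqt,
    mul_assoc, ← abs_mul]
  exact mul_le_mul_of_nonneg_left (le_abs_self _) hv.le

theorem mul_rpow_sub_one {x y : ℝ} (hx : 0 ≤ x) (hy : y ≠ 0) : x * x ^ (y - 1) = x ^ y := by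
  rw [← rpow_one_add' hx (by simpa), add_sub_cancel]

theorem mul_div_le_of_nonneg {a w : ℝ} (ha : 0 ≤ a) (hw : 0 ≤ w) : w * (a / w) ≤ a := by
  rcases hw.eq_or_lt with rfl | hw
  · simpa using ha
  · rw [mul_div_cancel₀ _ hw.ne']

namespace Matrix.IsSymm

variable {ι : Type*} [Fintype ι] {V : Matrix ι ι ℝ} {a b : ℝ}

theorem sum_apply_left (hV : V.IsSymm) (j : ι) : ∑ i, V i j = ∑ i, V j i :=
  sum_congr rfl fun i _ => hV.apply j i

theorem sum_sum_mul_div_rowSum_rpow_le (hV : V.IsSymm) (hnn : ∀ i j, 0 ≤ V i j)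
    {f g : ι → ℝ} (hf : ∀ i, 0 ≤ f i) (hg : ∀ i, 0 ≤ g i) (ha : 0 < a) (hb : 0 < b)
    (hab : a + b = 1) :
    ∑ i, ∑ j, V i j * ((f i / ∑ k, V i k) ^ a * (g j / ∑ k, V j k) ^ b) ≤
      (∑ i, f i) ^ a * (∑ i, g i) ^ b := by
  have hw (i : ι) : 0 ≤ ∑ k, V i k := sum_nonneg fun k _ => hnn i k
  calc _ ≤ (∑ i, (∑ k, V i k) * (f i / ∑ k, V i k)) ^ a *
          (∑ i, (∑ k, V i k) * (g i / ∑ k, V i k)) ^ b := by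
        simpa only [hV.sum_apply_left] using sum_sum_mul_rpow_mul_rpow_le_rowSum_colSum hnn
          (fun i => div_nonneg (hf i) (hw i)) (fun j => div_nonneg (hg j) (hw j)) ha hb hab
    _ ≤ (∑ i, f i) ^ a * (∑ i, g i) ^ b := by
        have hF₀ : 0 ≤ ∑ i, (∑ k, V i k) * (f i / ∑ k, V i k) :=
          sum_nonneg fun i _ => mul_nonneg (hw i) (div_nonneg (hf i) (hw i))
        have hG₀ : 0 ≤ ∑ i, (∑ k, V i k) * (g i / ∑ k, V i k) :=
          sum_nonneg fun i _ => mul_nonneg (hw i) (div_nonneg (hg i) (hw i))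
        exact mul_le_mul
          (rpow_le_rpow hF₀ (sum_le_sum fun i _ => mul_div_le_of_nonneg (hf i) (hw i)) ha.le)
          (rpow_le_rpow hG₀ (sum_le_sum fun i _ => mul_div_le_of_nonneg (hg i) (hw i)) hb.le)
          (rpow_nonneg hG₀ b) (rpow_nonneg (sum_nonneg fun i _ => hf i) a)

theorem sum_sum_mul_rowSum_rpow_le (hV : V.IsSymm) (hnn : ∀ i j, 0 ≤ V i j) {s : ℝ}
    (hs : s ≠ 0) (ha : 0 < a) (hb : 0 < b) (hab : a + b = 1) :
    ∑ i, ∑ j, V i j * (((∑ k, V i k) ^ (s - 1)) ^ a * ((∑ k, V j k) ^ (s - 1)) ^ b) ≤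
      ∑ i, (∑ k, V i k) ^ s := by
  have hw (i : ι) : 0 ≤ ∑ k, V i k := sum_nonneg fun k _ => hnn i k
  have hC (i : ι) : 0 ≤ (∑ k, V i k) ^ (s - 1) := rpow_nonneg (hw i) _
  calc _ ≤ (∑ i, (∑ k, V i k) * (∑ k, V i k) ^ (s - 1)) ^ a *
          (∑ i, (∑ k, V i k) * (∑ k, V i k) ^ (s - 1)) ^ b := by
        simpa only [hV.sum_apply_left] using
          sum_sum_mul_rpow_mul_rpow_le_rowSum_colSum hnn hC hC ha hb hab
    _ = ∑ i, (∑ k, V i k) ^ s := by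
        rw [← rpow_add' (sum_nonneg fun i _ => mul_nonneg (hw i) (hC i)) (by simp [hab]), hab,
          rpow_one]
        exact sum_congr rfl fun i _ => mul_rpow_sub_one (hw i) hs

theorem sum_sum_mul_mul_le_rowSum_rpow (hV : V.IsSymm) (hnn : ∀ i j, 0 ≤ V i j) {r q t : ℝ}
    (hr : 0 < r) (hq : 0 < q) (ht : 0 < t) (hrqt : r⁻¹ + q⁻¹ + t = 1) {x y : ι → ℝ}
    (hx : ∑ i, |x i| ^ r ≤ 1) (hy : ∑ i, |y i| ^ q ≤ 1) :
    ∑ i, ∑ j, V i j * x i * y j ≤ (∑ i, (∑ j, V i j) ^ t⁻¹) ^ t := by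
  set w : ι → ℝ := fun i => ∑ k, V i k
  have hw (i : ι) : 0 ≤ w i := sum_nonneg fun k _ => hnn i k
  set θ := r⁻¹ + q⁻¹
  have hθ : 0 < θ := by positivity
  have hα : 0 < r⁻¹ / θ := by positivity
  have hβ : 0 < q⁻¹ / θ := by positivity
  have hαβ : r⁻¹ / θ + q⁻¹ / θ = 1 := by rw [← add_div, div_self hθ.ne']
  set X : ι → ι → ℝ := fun i j => (|x i| ^ r / w i) ^ (r⁻¹ / θ) * (|y j| ^ q / w j) ^ (q⁻¹ / θ)
  set Y : ι → ι → ℝ := fun i j => (w i ^ (t⁻¹ - 1)) ^ (r⁻¹ / θ) * (w j ^ (t⁻¹ - 1)) ^ (q⁻¹ / θ)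
  have hX (i j : ι) : 0 ≤ X i j := by have := hw i; have := hw j; positivity
  have hY (i j : ι) : 0 ≤ Y i j := by have := hw i; have := hw j; positivity
  have split (i j : ι) : V i j * x i * y j ≤ V i j * (X i j ^ θ * Y i j ^ t) :=
    mul_mul_le_mul_rpow_mul_rpow (hnn i j)
      (fun h => h.trans_le (single_le_sum (fun k _ => hnn i k) (mem_univ j)))
      (fun h => h.trans_le ((single_le_sum (fun k _ => hnn k j) (mem_univ i)).trans_eq
        (hV.sum_apply_left j))) hr hq ht hrqt
  have hVX : 0 ≤ ∑ i, ∑ j, V i j * X i j :=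
    sum_nonneg fun i _ => sum_nonneg fun j _ => mul_nonneg (hnn i j) (hX i j)
  have hVY : 0 ≤ ∑ i, ∑ j, V i j * Y i j :=
    sum_nonneg fun i _ => sum_nonneg fun j _ => mul_nonneg (hnn i j) (hY i j)
  calc ∑ i, ∑ j, V i j * x i * y j
      ≤ ∑ i, ∑ j, V i j * (X i j ^ θ * Y i j ^ t) :=
        sum_le_sum fun i _ => sum_le_sum fun j _ => split i j
    _ ≤ (∑ i, ∑ j, V i j * X i j) ^ θ * (∑ i, ∑ j, V i j * Y i j) ^ t :=
        sum_sum_mul_rpow_mul_rpow_le hnn hX hY hθ ht hrqt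
    _ ≤ ((∑ i, |x i| ^ r) ^ (r⁻¹ / θ) * (∑ i, |y i| ^ q) ^ (q⁻¹ / θ)) ^ θ *
          (∑ i, w i ^ t⁻¹) ^ t := by
        gcongr ?_ ^ _ * ?_ ^ _
        · exact hV.sum_sum_mul_div_rowSum_rpow_le hnn (fun i => by positivity)
            (fun i => by positivity) hα hβ hαβ
        · exact hV.sum_sum_mul_rowSum_rpow_le hnn (inv_ne_zero ht.ne') hα hβ hαβ
    _ ≤ (1 ^ (r⁻¹ / θ) * 1 ^ (q⁻¹ / θ)) ^ θ * (∑ i, w i ^ t⁻¹) ^ t := by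
        have := sum_nonneg fun i (_ : i ∈ univ) => rpow_nonneg (hw i) t⁻¹
        gcongr
    _ = (∑ i, w i ^ t⁻¹) ^ t := by simp

end Matrix.IsSymm

theorem sum_abs_rpow_eq_one_of_rnorm_eq_one {n : ℕ} {q : ℝ} {x : Fin n → ℝ} (hq : q ≠ 0)
    (hx : rnorm q x = 1) : ∑ i, |x i| ^ q = 1 := by
  rw [rnorm, one_div] at hx
  rw [← rpow_inv_rpow (sum_nonneg fun i _ => rpow_nonneg (abs_nonneg (x i)) q) hq, hx, one_rpow]

/-- Key Hölder step bounding the bilinear form of a nonnegative symmetric matrix. -/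
theorem bilinear_le_rowSum {n : ℕ} (V : Matrix (Fin n) (Fin n) ℝ) (hV : V.IsSymm)
    (hnn : ∀ i j, 0 ≤ V i j) (p r : ℝ) (hp : 1 < p) (hpr : p < r)
    (x y : Fin n → ℝ) (hx : rnorm r x = 1) (hy : rnorm (p / (p - 1)) y = 1) :
    ∑ i, ∑ j, V i j * x i * y j ≤
      (∑ i, (∑ j, V i j) ^ (r * p / (r - p))) ^ ((r - p) / (r * p)) := by
  have hr : 0 < r := by linarith
  have hq : 0 < p / (p - 1) := div_pos (by linarith) (by linarith)
  have ht : 0 < (r - p) / (r * p) := div_pos (by linarith) (by positivity)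
  have hexp : r⁻¹ + (p / (p - 1))⁻¹ + (r - p) / (r * p) = 1 := by
    field_simp
    ring
  have := hV.sum_sum_mul_mul_le_rowSum_rpow hnn hr hq ht hexp
    (sum_abs_rpow_eq_one_of_rnorm_eq_one hr.ne' hx).le
    (sum_abs_rpow_eq_one_of_rnorm_eq_one hq.ne' hy).le
  rwa [inv_div] at this
end

section
/- Let 1 ≤ p < r ≤ ∞, γ = 1/p − 1/r, and let (c_k)_{k∈[m]} be reals. For any x, y ∈ ℝⁿ (n ≥ 2m) with ‖x‖_r = 1 and ‖y‖_{p*} = 1, Σ_{k=1}^m ( c_k x_{2k} y_{2k−1} + c_k x_{2k−1} y_{2k} ) ≤ ( 2 Σ_{k=1}^m |c_k|^{1/γ} )^{γ}. -/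
open ENNReal

/-- The Hölder conjugate of `p ∈ [1,∞]`. -/
noncomputable def holderConj (p : ℝ≥0∞) : ℝ≥0∞ :=
  if p = 1 then ⊤ else if p = ⊤ then 1 else ENNReal.ofReal (p.toReal / (p.toReal - 1))

/-!
Index the `2m` products by `j = (k, i) ∈ Fin m × Fin 2`, so that the sum becomes
`∑ j, a j * u j * v j` with `a (k, i) = c k`, `u` the restriction of `x` and `v` the restriction of
`y` with the two entries of each pair swapped. As `γ + 1/r + 1/p* = 1`, Hölder's inequality,
applied twice, bounds it by `‖a‖_{1/γ} ‖u‖_r ‖v‖_{p*}`. Restricting along an injection does not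
increase an `ℓ_q` norm, so the last two factors are at most `1`, and
`‖a‖_{1/γ} = (2 ∑ |c k|^{1/γ})^γ`.
-/

open scoped NNReal

lemma holderConjugate_holderConj {p : ℝ≥0∞} (hp : 1 ≤ p) : p.HolderConjugate (holderConj p) := by
  rw [holderConj]
  split_ifs with h1 htop
  · exact h1 ▸ .one_top
  · exact htop ▸ .top_one
  · have hP : 1 < p.toReal := by
      rw [← ENNReal.toReal_one]
      exact ENNReal.toReal_strict_mono htop (lt_of_le_of_ne hp (Ne.symm h1))
    have := (Real.HolderConjugate.conjExponent hP).ennrealOfReal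
    rwa [ENNReal.ofReal_toReal htop] at this

namespace lp

variable {α β E : Type*} [NormedAddCommGroup E]

theorem norm_comp_le_of_injective {p : ℝ≥0∞} (hp : p ≠ 0) {e : β → α}
    (he : Function.Injective e) (f : lp (fun _ : α => E) p) (hfe : Memℓp (f ∘ e) p) :
    ‖(⟨f ∘ e, hfe⟩ : lp (fun _ : β => E) p)‖ ≤ ‖f‖ := by
  rcases eq_or_ne p ⊤ with rfl | htop
  · exact norm_le_of_forall_le (norm_nonneg' f) fun j => norm_apply_le_norm hp f (e j)
  · have hp' : 0 < p.toReal := ENNReal.toReal_pos hp htop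
    refine norm_le_of_forall_sum_le hp' (norm_nonneg' f) fun s => ?_
    exact (Finset.sum_map s ⟨e, he⟩ fun i => ‖f i‖ ^ p.toReal).symm.trans_le
      (sum_rpow_le_norm_rpow hp' f _)

theorem sum_mul_mul_le [Fintype α] {p q r : ℝ≥0∞} (hpqr : p⁻¹ + q⁻¹ + r⁻¹ = 1)
    (a : lp (fun _ : α => ℝ) p) (u : lp (fun _ : α => ℝ) q) (v : lp (fun _ : α => ℝ) r) :
    ∑ i, a i * u i * v i ≤ ‖a‖ * ‖u‖ * ‖v‖ := by
  have : Fact (1 ≤ p) := ⟨ENNReal.inv_le_one.1 (hpqr ▸ by rw [add_assoc]; exact le_self_add)⟩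
  have : Fact (1 ≤ q) := ⟨ENNReal.inv_le_one.1 (hpqr ▸ by rw [add_right_comm]; exact le_add_self)⟩
  have : Fact (1 ≤ r) := ⟨ENNReal.inv_le_one.1 (hpqr ▸ le_add_self)⟩
  have : q.HolderTriple r (q⁻¹ + r⁻¹)⁻¹ := .of q r
  have : p.HolderConjugate (q⁻¹ + r⁻¹)⁻¹ := ⟨by rw [inv_inv, ← add_assoc, hpqr, inv_one]⟩
  have : Fact (1 ≤ (q⁻¹ + r⁻¹)⁻¹) := ⟨HolderConjugate.one_le _ p⟩
  let mul : α → ℝ →L[ℝ] ℝ →L[ℝ] ℝ := fun _ => ContinuousLinearMap.mul ℝ ℝ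
  have hmul : ∀ i, ‖mul i‖ ≤ (1 : ℝ≥0) := fun _ => ContinuousLinearMap.opNorm_mul_le ℝ ℝ
  let uv := holderL (p := q) (q := r) (q⁻¹ + r⁻¹)⁻¹ mul hmul u v
  calc ∑ i, a i * u i * v i = dualPairing p (q⁻¹ + r⁻¹)⁻¹ mul hmul a uv := by
        rw [dualPairing_apply, tsum_fintype]
        simp only [mul_assoc]
        rfl
    _ ≤ ‖a‖ * ‖uv‖ := by
        simpa using (le_abs_self _).trans <| (dualPairing p (q⁻¹ + r⁻¹)⁻¹ mul hmul)
          |>.le_of_opNorm₂_le_of_le (norm_dualPairing ..) le_rfl le_rfl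
    _ ≤ ‖a‖ * (‖u‖ * ‖v‖) := by
        gcongr
        simpa using (holderL (p := q) (q := r) (q⁻¹ + r⁻¹)⁻¹ mul hmul)
          |>.le_of_opNorm₂_le_of_le (norm_holderL_le ..) le_rfl le_rfl
    _ = ‖a‖ * ‖u‖ * ‖v‖ := (mul_assoc ..).symm

end lp

lemma lnorm_eq_norm_lp {n : ℕ} {q : ℝ≥0∞} (hq : q ≠ 0) (x : Fin n → ℝ) :
    lnorm q x = ‖(⟨x, .all x⟩ : lp (fun _ : Fin n => ℝ) q)‖ := by
  rw [lnorm]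
  split_ifs with htop
  · subst htop
    rw [lp.norm_eq_ciSup]
    rfl
  · rw [lp.norm_eq_tsum_rpow (ENNReal.toReal_pos hq htop), tsum_fintype]
    rfl

lemma norm_lp_comp_le_lnorm {ι : Type*} [Finite ι] {n : ℕ} {q : ℝ≥0∞} (hq : q ≠ 0)
    {e : ι → Fin n} (he : Function.Injective e) (x : Fin n → ℝ) :
    ‖(⟨x ∘ e, .all _⟩ : lp (fun _ : ι => ℝ) q)‖ ≤ lnorm q x :=
  lnorm_eq_norm_lp hq x ▸ lp.norm_comp_le_of_injective hq he ⟨x, .all x⟩ (.all _)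

lemma norm_lp_comp_fst_fin_two {ι : Type*} [Fintype ι] {s : ℝ≥0∞} (hs : 0 < s.toReal)
    (c : ι → ℝ) :
    ‖(⟨fun j : ι × Fin 2 => c j.1, .all _⟩ : lp (fun _ => ℝ) s)‖ =
      (2 * ∑ k, |c k| ^ s.toReal) ^ (1 / s.toReal) := by
  rw [lp.norm_eq_tsum_rpow hs, tsum_fintype]
  simp [Fintype.sum_prod_type, Finset.mul_sum, two_mul]

def pairIndex {n m : ℕ} (hn : 2 * m ≤ n) (j : Fin m × Fin 2) : Fin n :=
  ⟨2 * j.1 + j.2, by omega⟩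

lemma pairIndex_injective {n m : ℕ} (hn : 2 * m ≤ n) : Function.Injective (pairIndex hn) := by
  rintro ⟨k, i⟩ ⟨k', i'⟩ h
  simp only [pairIndex, Fin.mk.injEq] at h
  simp only [Prod.mk.injEq, Fin.ext_iff]
  omega

/-- With 0-based indices the paper's pair `(2k-1, 2k)` is `(2k, 2k+1)` here. -/
theorem paired_bilinear_le {n m : ℕ} (hn : 2 * m ≤ n) (c : Fin m → ℝ)
    (r p : ℝ≥0∞) (hp : 1 ≤ p) (hpr : p < r)
    (x y : Fin n → ℝ) (hx : lnorm r x = 1) (hy : lnorm (holderConj p) y = 1) :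
    (∑ k : Fin m,
        (c k * x ⟨2 * k.val + 1, by have := k.isLt; omega⟩
             * y ⟨2 * k.val, by have := k.isLt; omega⟩
         + c k * x ⟨2 * k.val, by have := k.isLt; omega⟩
             * y ⟨2 * k.val + 1, by have := k.isLt; omega⟩)) ≤
      (2 * ∑ k : Fin m, |c k| ^ (1 / ((p⁻¹).toReal - (r⁻¹).toReal)))
        ^ ((p⁻¹).toReal - (r⁻¹).toReal) := by
  have hp0 : p ≠ 0 := (zero_lt_one.trans_le hp).ne'
  have hrp : r⁻¹ < p⁻¹ := ENNReal.inv_lt_inv.2 hpr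
  rw [← ENNReal.toReal_sub_of_le hrp.le (inv_ne_top.2 hp0)]
  set γ := p⁻¹ - r⁻¹ with hγ
  have hconj := holderConjugate_holderConj hp
  have hexp : γ⁻¹⁻¹ + r⁻¹ + (holderConj p)⁻¹ = 1 := by
    rw [inv_inv, hγ, tsub_add_cancel_of_le hrp.le, hconj.inv_add_inv_eq_one]
  let a : lp (fun _ : Fin m × Fin 2 => ℝ) γ⁻¹ := ⟨fun j => c j.1, .all _⟩
  let u : lp (fun _ : Fin m × Fin 2 => ℝ) r := ⟨x ∘ pairIndex hn, .all _⟩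
  let v : lp (fun _ : Fin m × Fin 2 => ℝ) (holderConj p) :=
    ⟨y ∘ pairIndex hn ∘ Prod.map id Fin.rev, .all _⟩
  have hu : ‖u‖ ≤ 1 := (norm_lp_comp_le_lnorm ((pos_iff_ne_zero.2 hp0).trans hpr).ne'
    (pairIndex_injective hn) x).trans hx.le
  have hv : ‖v‖ ≤ 1 := (norm_lp_comp_le_lnorm hconj.symm.ne_zero
    ((pairIndex_injective hn).comp (Function.injective_id.prodMap Fin.rev_injective)) y).trans hy.le
  have ha : ‖a‖ = (2 * ∑ k : Fin m, |c k| ^ (1 / γ.toReal)) ^ γ.toReal := by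
    have hs : 0 < (γ⁻¹).toReal :=
      ENNReal.toReal_pos (ENNReal.inv_ne_zero.2 (sub_ne_top (inv_ne_top.2 hp0)))
        (inv_ne_top.2 (tsub_pos_of_lt hrp).ne')
    rw [norm_lp_comp_fst_fin_two hs, toReal_inv, one_div (_ : ℝ)⁻¹, inv_inv, one_div]
  calc _ = ∑ j, a j * u j * v j := by
        rw [Fintype.sum_prod_type]
        refine Finset.sum_congr rfl fun k _ => ?_
        rw [Fin.sum_univ_two, add_comm]
        rfl
    _ ≤ ‖a‖ * ‖u‖ * ‖v‖ := lp.sum_mul_mul_le hexp a u v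
    _ ≤ ‖a‖ :=
        (mul_le_of_le_one_right (mul_nonneg (lp.norm_nonneg' a) (lp.norm_nonneg' u)) hv).trans
          (mul_le_of_le_one_right (lp.norm_nonneg' a) hu)
    _ = _ := ha
end
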